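/- arXiv:1310.7654 — 2 statements merged into one kernel-verified Lean document; each statement's English description precedes it below -/
import Mathlib

section
/- Let x = (x_i)_{i∈[n]} and s = (s_i)_{i∈[n]} be product distributions over actions in an n-player m-action game, let ε > 0 and δ ≥ 0, and suppose that |u_i(a_i, s_{-i}) − u_i(a_i, x_{-i})| ≤ ε/6 for every player i and every action a_i ∈ [m], and that |u_i(s_i, x_{-i}) − u_i(x_i, x_{-i})| ≤ ε/6 for every player i. If x is not a (δ + ε)-Nash equilibrium, then s is not a (δ + ε/2)-Nash equilibrium. -/
open Finset

open scoped Classical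

noncomputable section

/-- `x` is a probability distribution on the finite type `A`. -/
def IsDist {A : Type*} [Fintype A] (x : A → ℝ) : Prop :=
  (∀ a, 0 ≤ x a) ∧ ∑ a, x a = 1

/-- Probability of the pure action profile `a` under the product distribution `x`. -/
def prodProb {n m : ℕ} (x : Fin n → Fin m → ℝ) (a : Fin n → Fin m) : ℝ :=
  ∏ i, x i (a i)

/-- Expected utility of the payoff function `u` under the product distribution `x`. -/
def EU {n m : ℕ} (u : (Fin n → Fin m) → ℝ) (x : Fin n → Fin m → ℝ) : ℝ :=
  ∑ a, prodProb x a * u a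

/-- The point mass (pure strategy) at action `b`. -/
def pureStrat {m : ℕ} (b : Fin m) : Fin m → ℝ := fun c => if c = b then 1 else 0

/-- `x` is an `ε`-Nash equilibrium of the game `u`: no player gains more than `ε`
by deviating to any pure action. -/
def IsNash {n m : ℕ} (u : Fin n → (Fin n → Fin m) → ℝ) (x : Fin n → Fin m → ℝ)
    (ε : ℝ) : Prop :=
  ∀ (i : Fin n) (b : Fin m),
    EU (u i) x ≥ EU (u i) (Function.update x i (pureStrat b)) - ε

/-- Empirical distribution of player `i` given `k` sampled action profiles. -/
def emp {n m : ℕ} (k : ℕ) (a : Fin k → Fin n → Fin m) (i : Fin n) : Fin m → ℝ :=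
  fun b => ((univ.filter fun t => a t i = b).card : ℝ) / k

/-- Probability of the event `E` over `k` i.i.d. samples from the product distribution `x`. -/
def PrProd {n m : ℕ} (k : ℕ) (x : Fin n → Fin m → ℝ)
    (E : (Fin k → Fin n → Fin m) → Prop) : ℝ :=
  ∑ a : Fin k → Fin n → Fin m, if E a then ∏ t, prodProb x (a t) else 0


lemma prodProb_update_aux {n m : ℕ} (y : Fin n → Fin m → ℝ) (i : Fin n) (w : Fin m → ℝ)
    (a : Fin n → Fin m) :
    prodProb (Function.update y i w) a = w (a i) * ∏ j ∈ univ.erase i, y j (a j) := by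
  unfold prodProb
  rw [← Finset.mul_prod_erase univ _ (mem_univ i)]
  congr 1
  · simp
  · exact Finset.prod_congr rfl fun j hj => by
      rw [Function.update_of_ne (Finset.ne_of_mem_erase hj)]

lemma EU_update_eq_sum_aux {n m : ℕ} (u : (Fin n → Fin m) → ℝ)
    (y : Fin n → Fin m → ℝ) (i : Fin n) (w : Fin m → ℝ) :
    EU u (Function.update y i w) = ∑ b, w b * EU u (Function.update y i (pureStrat b)) := by
  unfold EU
  simp_rw [prodProb_update_aux, Finset.mul_sum, pureStrat]
  rw [Finset.sum_comm]
  refine Finset.sum_congr rfl fun a _ => ?_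
  simp only [ite_mul, one_mul, zero_mul, mul_ite, mul_zero]
  rw [Finset.sum_ite_eq]
  simp only [mem_univ, if_true]; ring

/-- If `x` and `s` are product distributions with
`|uᵢ(aᵢ, s₋ᵢ) − uᵢ(aᵢ, x₋ᵢ)| ≤ ε/6` for all players `i` and actions `aᵢ`, and
`|uᵢ(sᵢ, x₋ᵢ) − uᵢ(xᵢ, x₋ᵢ)| ≤ ε/6` for all `i`, and `x` is not a `(δ + ε)`-Nash
equilibrium, then `s` is not a `(δ + ε/2)`-Nash equilibrium. -/
theorem stmt13 {n m : ℕ} (hn : 0 < n) (hm : 0 < m)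
    (u : Fin n → (Fin n → Fin m) → ℝ)
    (hu : ∀ i a, 0 ≤ u i a ∧ u i a ≤ 1)
    (x s : Fin n → Fin m → ℝ) (hx : ∀ i, IsDist (x i)) (hs : ∀ i, IsDist (s i))
    (ε δ : ℝ) (hε : 0 < ε) (hδ : 0 ≤ δ)
    (h1 : ∀ (i : Fin n) (b : Fin m),
      |EU (u i) (Function.update s i (pureStrat b)) -
        EU (u i) (Function.update x i (pureStrat b))| ≤ ε / 6)
    (h2 : ∀ i : Fin n,
      |EU (u i) (Function.update x i (s i)) - EU (u i) x| ≤ ε / 6)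
    (hNash : ¬ IsNash u x (δ + ε)) :
    ¬ IsNash u s (δ + ε / 2) := by
  intro hS
  apply hNash
  intro i b
  have hEs : EU (u i) s = ∑ c, s i c * EU (u i) (Function.update s i (pureStrat c)) := by
    conv_lhs => rw [← Function.update_eq_self i s]
    rw [EU_update_eq_sum_aux]
  have hEx : EU (u i) (Function.update x i (s i))
      = ∑ c, s i c * EU (u i) (Function.update x i (pureStrat c)) :=
    EU_update_eq_sum_aux _ _ _ _
  have h3 : |EU (u i) s - EU (u i) (Function.update x i (s i))| ≤ ε / 6 := by
    rw [hEs, hEx, ← Finset.sum_sub_distrib]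
    calc |∑ c, (s i c * EU (u i) (Function.update s i (pureStrat c))
            - s i c * EU (u i) (Function.update x i (pureStrat c)))|
        ≤ ∑ c, |s i c * EU (u i) (Function.update s i (pureStrat c))
            - s i c * EU (u i) (Function.update x i (pureStrat c))| :=
          Finset.abs_sum_le_sum_abs _ _
      _ ≤ ∑ c, s i c * (ε / 6) := by
          refine Finset.sum_le_sum fun c _ => ?_
          rw [← mul_sub, abs_mul, abs_of_nonneg ((hs i).1 c)]
          exact mul_le_mul_of_nonneg_left (h1 i c) ((hs i).1 c)
      _ = ε / 6 := by rw [← Finset.sum_mul, (hs i).2, one_mul]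
  have hSib := hS i b
  have h1b := h1 i b
  have h2i := h2 i
  rw [abs_le] at h3 h1b h2i
  linarith [hSib]
end
end

section
/- Consider the two-player game in which each player's action set is [2] × [m] (a 'real' action r ∈ [2] and a 'dummy' action d ∈ [m]), with payoffs u_1((r_1,d_1),(r_2,d_2)) = 1 if r_1 = r_2 and 0 otherwise, and u_2 = 1 − u_1. Let x be the correlated equilibrium defined by x((r_1,d),(r_2,d)) = 1/(4m) for every d ∈ [m] and every r_1, r_2 ∈ [2] (and zero elsewhere). Then there exist constants c > 0 and m₀ ∈ ℕ such that for all m ≥ m₀, the probability that the empirical distribution of k = m i.i.d. samples from x is a (1/(4e))-correlated equilibrium is at most e^{−c·m}. -/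
open Finset

open scoped Classical

noncomputable section

/-- Empirical distribution of `k` sampled elements of `A`. -/
def empJoint {A : Type*} [Fintype A] [DecidableEq A] (k : ℕ) (a : Fin k → A) : A → ℝ :=
  fun p => ((univ.filter fun t => a t = p).card : ℝ) / k

/-- Probability of the event `E` over `k` i.i.d. samples from the distribution `x`. -/
def PrJoint {A : Type*} [Fintype A] (k : ℕ) (x : A → ℝ) (E : (Fin k → A) → Prop) : ℝ :=
  ∑ a : Fin k → A, if E a then ∏ t, x (a t) else 0

/-- `x ∈ Δ(A₁ × A₂)` is an `ε`-correlated equilibrium of the two-player game with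
payoffs `u₁, u₂`: for every player and every deviation map `f` on that player's
actions the expected regret is at most `ε`. -/
def IsCE2 {A1 A2 : Type*} [Fintype A1] [Fintype A2]
    (u1 u2 : A1 → A2 → ℝ) (x : A1 × A2 → ℝ) (ε : ℝ) : Prop :=
  (∀ f : A1 → A1, ∑ a : A1 × A2, x a * (u1 (f a.1) a.2 - u1 a.1 a.2) ≤ ε) ∧
  (∀ f : A2 → A2, ∑ a : A1 × A2, x a * (u2 a.1 (f a.2) - u2 a.1 a.2) ≤ ε)

/-!
With only `m` samples, a constant fraction of them carry a dummy action that no other sample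
shares. On such a sample the empirical distribution reveals the opponent's real action, so player 1
gains by matching it and player 2 by mismatching it; together they gain the fraction `U / m` of
samples with a unique dummy, which an `ε`-correlated equilibrium bounds by `2ε`. Few unique dummies
force few distinct dummies (`2 D ≤ m + U`), while the number `D` of distinct dummies has mean at
least `(1 - 1/e) m` and changes by at most one when a single sample changes, so a Chernoff bound
for functions with bounded differences makes `U ≤ m / (2e)` exponentially unlikely.
-/

open Function Real
open scoped BigOperators

section BoundedDifferences

variable {ι α : Type*}

theorem expect_fin_succ_pi [Fintype α] {M : Type*} [AddCommMonoid M] [Module ℚ≥0 M] {k : ℕ}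
    (F : (Fin (k + 1) → α) → M) :
    𝔼 x, F x = 𝔼 v, 𝔼 y, F (Fin.cons v y) := by
  rw [← expect_product', univ_product_univ]
  exact (Fintype.expect_equiv (Fin.consEquiv fun _ => α) _ _ fun _ => rfl).symm

theorem expect_exp_le_of_abs_sub_le [Fintype α] [Nonempty α] {g : α → ℝ} {c θ : ℝ}
    (hg : ∀ v w, |g v - g w| ≤ c) (hθ : 0 ≤ θ) (hθc : θ * c ≤ 1) :
    𝔼 v, exp (θ * g v) ≤ exp (θ * 𝔼 v, g v + θ ^ 2 * c ^ 2) := by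
  set μ := 𝔼 v, g v
  have hdev : ∀ v, |g v - μ| ≤ c := fun v => by
    have hmean : g v - μ = 𝔼 w, (g v - g w) := by
      rw [expect_sub_distrib, Fintype.expect_const]
    rw [hmean]
    exact (abs_expect_le _ _).trans (expect_le univ_nonempty fun w _ => hg v w)
  have hpt : ∀ v, exp (θ * g v) ≤ exp (θ * μ) * (1 + θ * (g v - μ) + θ ^ 2 * c ^ 2) := fun v => by
    have hz : |θ * (g v - μ)| ≤ 1 := by
      rw [abs_mul, abs_of_nonneg hθ]
      exact (mul_le_mul_of_nonneg_left (hdev v) hθ).trans hθc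
    have hsq : (θ * (g v - μ)) ^ 2 ≤ θ ^ 2 * c ^ 2 := by
      rw [mul_pow, ← sq_abs (g v - μ)]
      exact mul_le_mul_of_nonneg_left (pow_le_pow_left₀ (abs_nonneg _) (hdev v) 2) (sq_nonneg θ)
    have htaylor := (abs_le.1 (abs_exp_sub_one_sub_id_le hz)).2
    calc exp (θ * g v) = exp (θ * μ) * exp (θ * (g v - μ)) := by rw [← exp_add]; ring_nf
      _ ≤ _ := mul_le_mul_of_nonneg_left (by linarith) (exp_pos _).le
  calc 𝔼 v, exp (θ * g v) ≤ 𝔼 v, exp (θ * μ) * (1 + θ * (g v - μ) + θ ^ 2 * c ^ 2) :=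
        expect_le_expect fun v _ => hpt v
    _ = exp (θ * μ) * (1 + θ ^ 2 * c ^ 2) := by
        rw [← mul_expect, expect_add_distrib, expect_add_distrib,
          ← mul_expect, expect_sub_distrib]
        simp only [Fintype.expect_const, sub_self, mul_zero, add_zero, μ]
    _ ≤ exp (θ * μ) * exp (θ ^ 2 * c ^ 2) :=
        mul_le_mul_of_nonneg_left (by linarith [add_one_le_exp (θ ^ 2 * c ^ 2)]) (exp_pos _).le
    _ = exp (θ * μ + θ ^ 2 * c ^ 2) := (exp_add _ _).symm

variable [DecidableEq ι]

def HasBoundedDifferences (f : (ι → α) → ℝ) (c : ℝ) : Prop :=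
  ∀ x i a, |f (update x i a) - f x| ≤ c

theorem HasBoundedDifferences.neg {f : (ι → α) → ℝ} {c : ℝ} (hf : HasBoundedDifferences f c) :
    HasBoundedDifferences (fun x => -f x) c := fun x i a => by
  rw [← abs_neg]; convert hf x i a using 2; ring

variable [Fintype α] [Nonempty α]

theorem HasBoundedDifferences.expect_exp_le {k : ℕ} {f : (Fin k → α) → ℝ} {c θ : ℝ}
    (hf : HasBoundedDifferences f c) (hθ : 0 ≤ θ) (hθc : θ * c ≤ 1) :
    𝔼 x, exp (θ * f x) ≤ exp (θ * 𝔼 x, f x + θ ^ 2 * c ^ 2 * k) := by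
  induction k with
  | zero => simp
  | succ k ih =>
    set F : α → ℝ := fun v => 𝔼 y, f (Fin.cons v y)
    have hsection : ∀ v, 𝔼 y, exp (θ * f (Fin.cons v y)) ≤ exp (θ * F v + θ ^ 2 * c ^ 2 * k) :=
      fun v => ih (fun y i a => by simpa only [Fin.cons_update] using hf (Fin.cons v y) i.succ a)
    have hF : ∀ v w, |F v - F w| ≤ c := fun v w => by
      rw [← expect_sub_distrib]
      refine (abs_expect_le _ _).trans (expect_le univ_nonempty fun y _ => ?_)
      simpa only [Fin.update_cons_zero] using hf (Fin.cons w y) 0 v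
    calc 𝔼 x, exp (θ * f x) = 𝔼 v, 𝔼 y, exp (θ * f (Fin.cons v y)) := expect_fin_succ_pi _
      _ ≤ 𝔼 v, exp (θ ^ 2 * c ^ 2 * k) * exp (θ * F v) :=
          expect_le_expect fun v _ => (hsection v).trans_eq (by rw [← exp_add]; ring_nf)
      _ ≤ exp (θ ^ 2 * c ^ 2 * k) * exp (θ * 𝔼 v, F v + θ ^ 2 * c ^ 2) := by
          rw [← mul_expect]
          exact mul_le_mul_of_nonneg_left (expect_exp_le_of_abs_sub_le hF hθ hθc) (exp_pos _).le
      _ = exp (θ * 𝔼 x, f x + θ ^ 2 * c ^ 2 * ↑(k + 1)) := by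
          rw [← exp_add, expect_fin_succ_pi f]; push_cast; ring_nf; rfl

theorem HasBoundedDifferences.lower_tail_le {k : ℕ} {f : (Fin k → α) → ℝ} {c θ : ℝ}
    (hf : HasBoundedDifferences f c) (hθ : 0 ≤ θ) (hθc : θ * c ≤ 1) (s : ℝ) :
    𝔼 x, (if f x ≤ 𝔼 y, f y - s then (1 : ℝ) else 0) ≤ exp (-(θ * s) + θ ^ 2 * c ^ 2 * k) := by
  have hchernoff : ∀ x, (if f x ≤ 𝔼 y, f y - s then (1 : ℝ) else 0) ≤
      exp (θ * (𝔼 y, f y - s)) * exp (θ * -f x) := fun x => by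
    split_ifs with hx
    · rw [← exp_add]; exact one_le_exp (by nlinarith)
    · positivity
  calc _ ≤ 𝔼 x, exp (θ * (𝔼 y, f y - s)) * exp (θ * -f x) :=
        expect_le_expect fun x _ => hchernoff x
    _ ≤ exp (θ * (𝔼 y, f y - s)) * exp (θ * 𝔼 x, -f x + θ ^ 2 * c ^ 2 * k) := by
        rw [← mul_expect]
        exact mul_le_mul_of_nonneg_left (hf.neg.expect_exp_le hθ hθc) (exp_pos _).le
    _ = exp (-(θ * s) + θ ^ 2 * c ^ 2 * k) := by
        rw [← exp_add, expect_neg_distrib]; ring_nf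

end BoundedDifferences

section DistinctValues

variable {ι β : Type*} [Fintype ι] [DecidableEq ι] [DecidableEq β]

def uniqueIndices (v : ι → β) : Finset ι := {t | ∀ s, s ≠ t → v s ≠ v t}

theorem mem_uniqueIndices {v : ι → β} {t : ι} :
    t ∈ uniqueIndices v ↔ ∀ s, s ≠ t → v s ≠ v t := by
  simp [uniqueIndices]

theorem two_mul_card_image_le (v : ι → β) :
    2 * #(univ.image v) ≤ Fintype.card ι + #(uniqueIndices v) := by
  have hmaps : ∀ t ∈ (univ : Finset ι), v t ∈ univ.image v := fun t _ =>
    mem_image_of_mem v (mem_univ t)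
  have hfiber : ∀ w ∈ univ.image v,
      2 ≤ #{t | v t = w} + #{t ∈ uniqueIndices v | v t = w} := fun w hw => by
    obtain ⟨t, -, rfl⟩ := mem_image.1 hw
    by_cases ht : t ∈ uniqueIndices v
    · have h1 : 1 ≤ #{s | v s = v t} := card_pos.2 ⟨t, by simp⟩
      have h2 : 1 ≤ #{s ∈ uniqueIndices v | v s = v t} := card_pos.2 ⟨t, by simp [ht]⟩
      omega
    · obtain ⟨s, hst, hs⟩ : ∃ s, s ≠ t ∧ v s = v t := by simpa [mem_uniqueIndices] using ht
      have : 2 ≤ #{s' | v s' = v t} := by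
        rw [show 2 = #{s, t} from (card_pair hst).symm]
        exact card_le_card (by simp [insert_subset_iff, hs])
      omega
  calc 2 * #(univ.image v) = ∑ _w ∈ univ.image v, 2 := by rw [sum_const, smul_eq_mul, mul_comm]
    _ ≤ ∑ w ∈ univ.image v, (#{t | v t = w} + #{t ∈ uniqueIndices v | v t = w}) :=
        sum_le_sum hfiber
    _ = Fintype.card ι + #(uniqueIndices v) := by
        rw [sum_add_distrib, ← card_eq_sum_card_fiberwise hmaps,
          ← card_eq_sum_card_fiberwise fun t _ => hmaps t (mem_univ t), card_univ]

theorem card_image_update_le (v : ι → β) (i : ι) (b : β) :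
    #(univ.image (update v i b)) ≤ #(univ.image v) + 1 := by
  calc #(univ.image (update v i b)) ≤ #(insert b (univ.image v)) := by
        refine card_le_card fun w hw => ?_
        obtain ⟨t, -, rfl⟩ := mem_image.1 hw
        rcases eq_or_ne t i with rfl | hti
        · simp
        · simp [update_of_ne hti]
    _ ≤ #(univ.image v) + 1 := card_insert_le _ _

theorem hasBoundedDifferences_card_image :
    HasBoundedDifferences (fun v : ι → β => (#(univ.image v) : ℝ)) 1 := fun v i b => by
  have hup : (#(univ.image (update v i b)) : ℝ) ≤ #(univ.image v) + 1 := by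
    exact_mod_cast card_image_update_le v i b
  have hdown : (#(univ.image v) : ℝ) ≤ #(univ.image (update v i b)) + 1 := by
    simpa using (show (#(univ.image (update (update v i b) i (v i))) : ℝ) ≤ _ by
      exact_mod_cast card_image_update_le (update v i b) i (v i))
  rw [abs_le]; constructor <;> linarith

variable [Fintype β]

theorem sum_card_image :
    ∑ v : ι → β, #(univ.image v) =
      Fintype.card β *
        (Fintype.card β ^ Fintype.card ι - (Fintype.card β - 1) ^ Fintype.card ι) := by
  have hmiss : ∀ w : β,
      #{v : ι → β | w ∉ univ.image v} = (Fintype.card β - 1) ^ Fintype.card ι := fun w => by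
    rw [show ({v : ι → β | w ∉ univ.image v} : Finset _) =
        Fintype.piFinset fun _ => univ.erase w by
      ext v; simp [Fintype.mem_piFinset, eq_comm]]
    simp [card_erase_of_mem]
  have hhit : ∀ w : β, #{v : ι → β | w ∈ univ.image v} =
      Fintype.card β ^ Fintype.card ι - (Fintype.card β - 1) ^ Fintype.card ι := fun w => by
    have hsplit := card_filter_add_card_filter_not (s := univ) fun v : ι → β => w ∈ univ.image v
    rw [card_univ, Fintype.card_fun, hmiss w] at hsplit
    omega
  calc ∑ v : ι → β, #(univ.image v)
        = ∑ v : ι → β, ∑ w, if w ∈ univ.image v then 1 else 0 := by simp [sum_boole]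
    _ = ∑ w, #{v : ι → β | w ∈ univ.image v} := by rw [sum_comm]; simp [sum_boole]
    _ = _ := by simp only [hhit, sum_const, card_univ, smul_eq_mul]

theorem one_sub_exp_neg_mul_le_expect_card_image [Nonempty β] :
    (1 - exp (-(Fintype.card ι / Fintype.card β))) * Fintype.card β ≤
      𝔼 v : ι → β, (#(univ.image v) : ℝ) := by
  set n := Fintype.card β with hn_def
  set k := Fintype.card ι
  have hn : 1 ≤ n := Fintype.card_pos
  have hnR : (1 : ℝ) ≤ n := by exact_mod_cast hn
  have hexpect : 𝔼 v : ι → β, (#(univ.image v) : ℝ) = n * (1 - (1 - 1 / n) ^ k) := by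
    rw [Fintype.expect_eq_sum_div_card, ← Nat.cast_sum, sum_card_image, Fintype.card_fun,
      Nat.cast_mul, Nat.cast_sub (Nat.pow_le_pow_left (Nat.sub_le n 1) k), Nat.cast_pow,
      Nat.cast_pow, Nat.cast_sub hn, Nat.cast_one, ← hn_def, one_sub_div (by positivity), div_pow]
    field_simp
  have hpow : (1 - 1 / n) ^ k ≤ exp (-(k / n)) := calc
    (1 - 1 / n) ^ k ≤ exp (-(1 / n)) ^ k :=
      pow_le_pow_left₀ (by rw [sub_nonneg, div_le_one (by linarith)]; exact hnR)
        (by linarith [add_one_le_exp (-(1 / (n : ℝ)))]) k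
    _ = exp (-(k / n)) := by rw [← exp_nat_mul]; ring_nf
  rw [hexpect]
  nlinarith

theorem card_image_le_expect_sub_of_card_uniqueIndices_le {m : ℕ} (hm : 0 < m) {δ : ℝ}
    (v : Fin m → Fin m) (hv : (#(uniqueIndices v) : ℝ) / m ≤ 2 * δ) :
    (#(univ.image v) : ℝ) ≤
      𝔼 w : Fin m → Fin m, (#(univ.image w) : ℝ) - (1 / 2 - exp (-1) - δ) * m := by
  have : Nonempty (Fin m) := ⟨⟨0, hm⟩⟩
  have hmR : (0 : ℝ) < m := by exact_mod_cast hm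
  have hD : 2 * (#(univ.image v) : ℝ) ≤ m + #(uniqueIndices v) := by
    exact_mod_cast Fintype.card_fin m ▸ two_mul_card_image_le v
  have hmean := one_sub_exp_neg_mul_le_expect_card_image (ι := Fin m) (β := Fin m)
  rw [Fintype.card_fin, div_self hmR.ne'] at hmean
  rw [div_le_iff₀ hmR] at hv
  linarith

end DistinctValues

section Sampling

variable {A B : Type*} [Fintype A] [Fintype B] {k : ℕ}

theorem PrJoint_mono_of_support {x : A → ℝ} (hx : ∀ p, 0 ≤ x p) {E E' : (Fin k → A) → Prop}
    (h : ∀ a, (∀ t, x (a t) ≠ 0) → E a → E' a) : PrJoint k x E ≤ PrJoint k x E' := by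
  refine sum_le_sum fun a _ => ?_
  by_cases hsupp : ∀ t, x (a t) ≠ 0
  · have hprod : 0 ≤ ∏ t, x (a t) := prod_nonneg fun t _ => hx (a t)
    by_cases hE : E a
    · simp [hE, h a hsupp hE]
    · rw [if_neg hE]; split_ifs <;> simp [hprod]
  · obtain ⟨t, ht⟩ := not_forall_not.1 hsupp
    simp [prod_eq_zero (f := fun t => x (a t)) (mem_univ t) ht]

theorem PrJoint_comp [DecidableEq B] (x : A → ℝ) (g : A → B) (Q : (Fin k → B) → Prop) :
    PrJoint k x (fun a => Q (g ∘ a)) = PrJoint k (fun b => ∑ p with g p = b, x p) Q := by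
  unfold PrJoint
  rw [← sum_fiberwise univ fun a : Fin k → A => g ∘ a]
  refine sum_congr rfl fun b _ => ?_
  have hfiber :
      ({a | g ∘ a = b} : Finset (Fin k → A)) = Fintype.piFinset fun t => {p | g p = b t} := by
    ext a; simp [Fintype.mem_piFinset, funext_iff]
  rw [prod_univ_sum, ← hfiber]
  split_ifs with hQ
  · exact sum_congr rfl fun a ha => by simp [(mem_filter.1 ha).2, hQ]
  · exact sum_eq_zero fun a ha => by simp [(mem_filter.1 ha).2, hQ]

theorem PrJoint_uniform (Q : (Fin k → B) → Prop) :
    PrJoint k (fun _ => (Fintype.card B : ℝ)⁻¹) Q = 𝔼 v, if Q v then 1 else 0 := by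
  rw [PrJoint, Fintype.expect_eq_sum_div_card, Fintype.card_fun, Fintype.card_fin, sum_div]
  refine sum_congr rfl fun v _ => ?_
  split_ifs <;> simp

end Sampling

theorem sum_empJoint_mul {A : Type*} [Fintype A] [DecidableEq A] {k : ℕ} (a : Fin k → A)
    (φ : A → ℝ) : ∑ p, empJoint k a p * φ p = (∑ t, φ (a t)) / k := by
  simp only [empJoint, div_mul_eq_mul_div, ← sum_div]
  congr 1
  rw [← sum_fiberwise univ a fun t => φ (a t)]
  refine sum_congr rfl fun p _ => ?_
  rw [sum_congr rfl fun t ht => by rw [(mem_filter.1 ht).2], sum_const, nsmul_eq_mul]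

section MatchingPenniesWithDummies

variable {β : Type*}

def matchPayoff : Fin 2 × β → Fin 2 × β → ℝ := fun a1 a2 => if a1.1 = a2.1 then 1 else 0

def mismatchPayoff : Fin 2 × β → Fin 2 × β → ℝ := fun a1 a2 => if a1.1 = a2.1 then 0 else 1

def commonDummyDist (n : ℕ) : (Fin 2 × Fin n) × (Fin 2 × Fin n) → ℝ :=
  fun p => if p.1.2 = p.2.2 then 1 / (4 * (n : ℝ)) else 0

variable [Fintype β] [DecidableEq β] {k : ℕ}

theorem card_uniqueIndices_div_le_of_isCE2 {ε : ℝ} (a : Fin k → (Fin 2 × β) × (Fin 2 × β))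
    (hdiag : ∀ t, (a t).1.2 = (a t).2.2)
    (hCE : IsCE2 matchPayoff mismatchPayoff (empJoint k a) ε) :
    (#(uniqueIndices fun t => (a t).1.2) : ℝ) / k ≤ 2 * ε := by
  set v : Fin k → β := fun t => (a t).1.2
  set U := uniqueIndices v
  have hU : ∀ t, (∃ s ∈ U, v s = v t) ↔ t ∈ U := fun t => by
    refine ⟨fun ⟨s, hs, hst⟩ => ?_, fun ht => ⟨t, ht, rfl⟩⟩
    by_contra ht
    exact mem_uniqueIndices.1 hs t (fun h => ht (h ▸ hs)) hst.symm
  have hchoose : ∀ {d} (h : ∃ s ∈ U, v s = d) t, t ∈ U → v t = d → h.choose = t :=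
    fun h t ht hvt => by
      by_contra hne
      exact mem_uniqueIndices.1 ht _ hne (h.choose_spec.2.trans hvt.symm)
  -- on the dummy of a sample whose dummy is unique, player 1 matches and player 2 mismatches
  let f1 : Fin 2 × β → Fin 2 × β := fun q =>
    if h : ∃ s ∈ U, v s = q.2 then ((a h.choose).2.1, q.2) else q
  let f2 : Fin 2 × β → Fin 2 × β := fun q =>
    if h : ∃ s ∈ U, v s = q.2 then ((a h.choose).1.1 + 1, q.2) else q
  set gain1 : Fin k → ℝ := fun t =>
    matchPayoff (f1 (a t).1) (a t).2 - matchPayoff (a t).1 (a t).2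
  set gain2 : Fin k → ℝ := fun t =>
    mismatchPayoff (a t).1 (f2 (a t).2) - mismatchPayoff (a t).1 (a t).2
  have hgain : ∀ t, gain1 t + gain2 t = if t ∈ U then 1 else 0 := fun t => by
    have hdummy : (a t).2.2 = v t := (hdiag t).symm
    simp only [gain1, gain2, matchPayoff, mismatchPayoff]
    by_cases ht : t ∈ U
    · have h := (hU t).2 ht
      have h' : ∃ s ∈ U, v s = (a t).2.2 := hdummy ▸ h
      have hf1 : f1 (a t).1 = ((a t).2.1, v t) :=
        (dif_pos h).trans (by rw [hchoose h t ht rfl])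
      have hf2 : f2 (a t).2 = ((a t).1.1 + 1, (a t).2.2) :=
        (dif_pos h').trans (by rw [hchoose h' t ht hdummy.symm])
      have hflip : ∀ r : Fin 2, r ≠ r + 1 := by decide
      rw [hf1, hf2, if_pos ht, if_pos rfl, if_neg (hflip _)]
      split_ifs <;> norm_num
    · have h := mt (hU t).1 ht
      have hf1 : f1 (a t).1 = (a t).1 := dif_neg h
      have hf2 : f2 (a t).2 = (a t).2 := dif_neg (hdummy ▸ h)
      rw [hf1, hf2, if_neg ht]
      ring
  have h1 := hCE.1 f1
  have h2 := hCE.2 f2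
  rw [sum_empJoint_mul a (fun p => _ - _)] at h1 h2
  have hsum : (#U : ℝ) = ∑ t, gain1 t + ∑ t, gain2 t := by
    rw [← sum_add_distrib, sum_congr rfl fun t _ => hgain t]; simp
  rw [hsum, add_div]
  linarith

theorem commonDummyDist_marginal (n : ℕ) (b : Fin n) :
    ∑ p with p.1.2 = b, commonDummyDist n p = (Fintype.card (Fin n) : ℝ)⁻¹ := by
  rw [Fintype.card_fin, show (n : ℝ)⁻¹ = 2 * (2 * (1 / (4 * n))) by ring]
  simp [commonDummyDist, sum_filter, Fintype.sum_prod_type]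

theorem PrJoint_isCE2_le (k n : ℕ) (ε : ℝ) :
    PrJoint k (commonDummyDist n) (fun a => IsCE2 matchPayoff mismatchPayoff (empJoint k a) ε) ≤
      𝔼 v : Fin k → Fin n, if (#(uniqueIndices v) : ℝ) / k ≤ 2 * ε then 1 else 0 := by
  have hx : ∀ p, 0 ≤ commonDummyDist n p := fun p => by unfold commonDummyDist; positivity
  set fewUnique : (Fin k → Fin n) → Prop := fun v => (#(uniqueIndices v) : ℝ) / k ≤ 2 * ε
  calc _ ≤ PrJoint k (commonDummyDist n) fun a => fewUnique ((fun p => p.1.2) ∘ a) :=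
        PrJoint_mono_of_support hx fun a ha hCE => card_uniqueIndices_div_le_of_isCE2 a
          (fun t => by_contra fun h => ha t (if_neg h)) hCE
    _ = _ := by
        rw [PrJoint_comp _ _ fewUnique]
        simp only [commonDummyDist_marginal, PrJoint_uniform]
        rfl

end MatchingPenniesWithDummies

/-- Consider the two-player game where each action is a pair
`(r, d) ∈ [2] × [m]` of a "real" matching-pennies action and a "dummy" action, with
`u₁ = 1_{r₁ = r₂}` and `u₂ = 1 − u₁`, and let `x` be the correlated equilibrium that
puts probability `1/(4m)` on each profile `((r₁,d),(r₂,d))` (common dummy action).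
Then there are constants `c > 0` and `m₀` such that for all `m ≥ m₀`, the probability
that the empirical distribution of `k = m` i.i.d. samples from `x` is a
`1/(4e)`-correlated equilibrium is at most `e^{−c·m}`. -/
theorem stmt16 :
    ∃ c > (0 : ℝ), ∃ m₀ : ℕ, ∀ m : ℕ, m₀ ≤ m →
      PrJoint m
        (fun p : (Fin 2 × Fin m) × (Fin 2 × Fin m) =>
          if p.1.2 = p.2.2 then 1 / (4 * (m : ℝ)) else 0)
        (fun a => IsCE2
          (fun a1 a2 : Fin 2 × Fin m => if a1.1 = a2.1 then (1 : ℝ) else 0)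
          (fun a1 a2 : Fin 2 × Fin m => if a1.1 = a2.1 then (0 : ℝ) else 1)
          (empJoint m a) (1 / (4 * Real.exp 1)))
      ≤ Real.exp (-(c * m)) := by
  set ε := 1 / (4 * exp 1)
  set ε₀ := 1 / 2 - exp (-1) - ε
  have hε₀ : 0 < ε₀ := by
    have := exp_one_gt_d9
    simp only [ε₀, ε, exp_neg]
    field_simp
    linarith
  have hε₀_le : ε₀ ≤ 2 := by
    have : 0 < ε + exp (-1) := by positivity
    simp only [ε₀]
    linarith
  refine ⟨ε₀ ^ 2 / 4, by positivity, 1, fun m hm => ?_⟩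
  have : Nonempty (Fin m) := ⟨⟨0, hm⟩⟩
  calc _ ≤ 𝔼 v : Fin m → Fin m, if (#(uniqueIndices v) : ℝ) / m ≤ 2 * ε then 1 else 0 :=
        PrJoint_isCE2_le m m ε
    _ ≤ 𝔼 v : Fin m → Fin m,
          if (#(univ.image v) : ℝ) ≤ 𝔼 w, (#(univ.image w) : ℝ) - ε₀ * m then 1 else 0 :=
        expect_le_expect fun v _ => by
          by_cases hv : (#(uniqueIndices v) : ℝ) / m ≤ 2 * ε
          · rw [if_pos hv, if_pos (card_image_le_expect_sub_of_card_uniqueIndices_le hm v hv)]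
          · rw [if_neg hv]; positivity
    _ ≤ exp (-(ε₀ / 2 * (ε₀ * m)) + (ε₀ / 2) ^ 2 * 1 ^ 2 * m) :=
        hasBoundedDifferences_card_image.lower_tail_le (by positivity) (by linarith) _
    _ = exp (-(ε₀ ^ 2 / 4 * m)) := by ring_nf
end
end
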